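/- Let u and û be two utility functions on the same finite normal-form game structure and let ε > 0. If |u_p(s) − û_p(s)| ≤ max{ε, Reg_p(s; û)/2} for every player p and every pure strategy profile s, then E(u) ⊆ E_{2ε}(û), and for every γ with 0 ≤ γ ≤ 2ε it holds that E_γ(û) ⊆ E_{2ε+γ}(u). -/
import Mathlib


/-- Regret of player `p` at pure strategy profile `s` under utility function `u`. -/
noncomputable def Reg {ι : Type*} {S : ι → Type*} [DecidableEq ι]
    [∀ i, Fintype (S i)] [∀ i, Nonempty (S i)]
    (u : ι → (∀ q, S q) → ℝ) (p : ι) (s : ∀ q, S q) : ℝ :=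
  (⨆ t : S p, u p (Function.update s p t)) - u p s

/-- The set of `γ`-pure Nash equilibria of the utility function `u`. -/
noncomputable def PNE {ι : Type*} {S : ι → Type*} [DecidableEq ι]
    [∀ i, Fintype (S i)] [∀ i, Nonempty (S i)]
    (u : ι → (∀ q, S q) → ℝ) (γ : ℝ) : Set (∀ q, S q) :=
  {s | ∀ p, Reg u p s ≤ γ}

lemma Reg_adj {ι : Type*} {S : ι → Type*} [DecidableEq ι]
    [∀ i, Fintype (S i)] [∀ i, Nonempty (S i)]
    (u : ι → (∀ q, S q) → ℝ) (p : ι) (s : ∀ q, S q) (t : S p) :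
    Reg u p (Function.update s p t)
      = (⨆ t' : S p, u p (Function.update s p t')) - u p (Function.update s p t) := by
  unfold Reg
  congr 1
  refine iSup_congr fun t' => ?_
  rw [Function.update_idem]

lemma Reg_nonneg {ι : Type*} {S : ι → Type*} [DecidableEq ι]
    [∀ i, Fintype (S i)] [∀ i, Nonempty (S i)]
    (u : ι → (∀ q, S q) → ℝ) (p : ι) (s : ∀ q, S q) : 0 ≤ Reg u p s := by
  have : u p s ≤ ⨆ t : S p, u p (Function.update s p t) := by
    have := le_ciSup (f := fun t : S p => u p (Function.update s p t))
      (Set.Finite.bddAbove (Set.finite_range _)) (s p)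
    rwa [Function.update_eq_self] at this
  simpa [Reg] using this

/-- If all utilities are estimated to within `max{ε, Reg_p(s; û)/2}`, then
`E(u) ⊆ E_{2ε}(û)` and `E_γ(û) ⊆ E_{2ε+γ}(u)` for all `0 ≤ γ ≤ 2ε`. -/
theorem middle_dual_containment_pure {ι : Type*} {S : ι → Type*}
    [DecidableEq ι] [Fintype ι] [Nonempty ι]
    [∀ i, Fintype (S i)] [∀ i, Nonempty (S i)]
    (u uh : ι → (∀ q, S q) → ℝ) (ε : ℝ) (hε : 0 < ε)
    (h : ∀ (p : ι) (s : ∀ q, S q), |u p s - uh p s| ≤ max ε (Reg uh p s / 2)) :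
    PNE u 0 ⊆ PNE uh (2 * ε) ∧
      ∀ γ : ℝ, 0 ≤ γ → γ ≤ 2 * ε → PNE uh γ ⊆ PNE u (2 * ε + γ) := by
  constructor
  · intro s hs p
    have hs0 : Reg u p s ≤ 0 := hs p
    -- maximizer of uh in the adjacent set
    obtain ⟨t, ht⟩ := Finite.exists_max (fun t : S p => uh p (Function.update s p t))
    have hM : (⨆ t' : S p, uh p (Function.update s p t'))
        = uh p (Function.update s p t) :=
      le_antisymm (ciSup_le ht)
        (le_ciSup (f := fun t' : S p => uh p (Function.update s p t'))
          (Set.Finite.bddAbove (Set.finite_range _)) t)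
    have hReg0 : Reg uh p (Function.update s p t) = 0 := by
      rw [Reg_adj, hM]; ring
    have h1 : |u p (Function.update s p t) - uh p (Function.update s p t)| ≤ ε := by
      have := h p (Function.update s p t)
      rwa [hReg0, max_eq_left (by linarith)] at this
    have h2 : u p (Function.update s p t) ≤ u p s := by
      have hle : u p (Function.update s p t)
          ≤ ⨆ t' : S p, u p (Function.update s p t') :=
        le_ciSup (f := fun t' : S p => u p (Function.update s p t'))
          (Set.Finite.bddAbove (Set.finite_range _)) t
      have : (⨆ t' : S p, u p (Function.update s p t')) - u p s ≤ 0 := hs0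
      linarith
    have h3 := h p s
    have habs1 := abs_le.mp h1
    have habs3 := abs_le.mp h3
    have hRnn := Reg_nonneg uh p s
    have hRdef : Reg uh p s = (⨆ t' : S p, uh p (Function.update s p t')) - uh p s := rfl
    rw [hRdef, hM] at hRnn ⊢
    rcases le_total ε (Reg uh p s / 2) with hc | hc
    · rw [max_eq_right hc] at habs3
      rw [hRdef, hM] at habs3
      linarith [habs1.1, habs3.2]
    · rw [max_eq_left hc] at habs3
      linarith [habs1.1, habs3.2]
  · intro γ hγ0 hγ s hs p
    have hsγ : Reg uh p s ≤ γ := hs p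
    have hRnnS := Reg_nonneg uh p s
    -- bound u p s from below
    have h3 := abs_le.mp (h p s)
    have hmaxS : max ε (Reg uh p s / 2) ≤ ε := by
      apply max_le le_rfl; linarith
    have hus : uh p s - ε ≤ u p s := by
      have := h3.1
      have := le_trans h3.2 hmaxS  -- not needed for this dir
      nlinarith [h3.1, hmaxS]
    -- the sup for uh
    set M := ⨆ t' : S p, uh p (Function.update s p t') with hMdef
    have hMs : M - uh p s ≤ γ := hsγ
    have hub : ∀ t : S p, u p (Function.update s p t) ≤ M + ε := by
      intro t
      have hR' : Reg uh p (Function.update s p t)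
          = M - uh p (Function.update s p t) := Reg_adj uh p s t
      have hR'nn := Reg_nonneg uh p (Function.update s p t)
      have h4 := abs_le.mp (h p (Function.update s p t))
      rw [hR'] at h4 hR'nn
      rcases le_total ε ((M - uh p (Function.update s p t)) / 2) with hc | hc
      · rw [max_eq_right hc] at h4
        linarith [h4.2]
      · rw [max_eq_left hc] at h4
        linarith [h4.2]
    have hsup : (⨆ t : S p, u p (Function.update s p t)) ≤ M + ε := ciSup_le hub
    have : Reg u p s = (⨆ t : S p, u p (Function.update s p t)) - u p s := rfl
    rw [this]
    linarith
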